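/- arXiv:2212.06738 — 2 statements merged into one kernel-verified Lean document; each statement's English description precedes it below -/
import Mathlib

section
/- Let S be an absolute integral closure of R such that every absolute integral closure of R is R-isomorphic to S (i.e. R⁺ exists and equals S), and let F be a submonoid of the regular elements of R. Then every absolute integral closure of F⁻¹R is F⁻¹R-isomorphic to F⁻¹S; that is, (F⁻¹R)⁺ = F⁻¹(R⁺). -/
/-!
If `g : F⁻¹R → T` is an absolute integral closure, the integral closure `S'` of `R` in `T` is an
absolute integral closure of `R`: roots in `T` of monic polynomials over `S'` are integral over
`R`, and since `F⁻¹R → T` is integral, every element of `T` becomes integral over `R` after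
multiplication by some element of `F`, which also shows `T = F⁻¹S'`. Uniqueness of `R⁺` gives an
`R`-isomorphism `S' ≅ S`, which localizes to `T ≅ F⁻¹S`.
-/

/-- A ring extension `f : R →+* S` is *tight* if every nonzero ideal of `S` contracts to a
nonzero ideal of `R`. -/
def Tight {R S : Type*} [CommRing R] [CommRing S] (f : R →+* S) : Prop :=
  ∀ s : S, s ≠ 0 → ∃ t : S, ∃ r : R, r ≠ 0 ∧ s * t = f r

/-- A commutative ring `S` is *absolutely integrally closed* if every monic polynomial of
positive degree over `S` has a root in `S`. -/
def AIClosed (S : Type*) [CommRing S] : Prop :=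
  ∀ p : Polynomial S, p.Monic → 0 < p.degree → ∃ x : S, p.IsRoot x

/-- `f : R →+* S` realizes `S` as an *absolute integral closure* of `R`. -/
def IsAIC {R S : Type*} [CommRing R] [CommRing S] (f : R →+* S) : Prop :=
  Function.Injective f ∧ f.IsIntegral ∧ Tight f ∧ AIClosed S

/-- The natural map `F⁻¹R →+* F⁻¹S` induced by `f : R →+* S` on localizations. -/
noncomputable def locMap {R S : Type*} [CommRing R] [CommRing S] (f : R →+* S)
    (F : Submonoid R) : Localization F →+* Localization (F.map f) :=
  IsLocalization.map (Localization (F.map f)) f (Submonoid.le_comap_map F)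

open Polynomial in
theorem aiClosed_integralClosure {R T : Type*} [CommRing R] [CommRing T] [Algebra R T]
    (hT : AIClosed T) : AIClosed (integralClosure R T) := by
  intro p hmonic hdeg
  set ι := algebraMap (integralClosure R T) T
  have hι : Function.Injective ι := Subtype.val_injective
  obtain ⟨x, hx⟩ := hT (p.map ι) (hmonic.map ι) (by rwa [degree_map_eq_of_injective hι])
  have hroot : aeval x p = 0 := by rwa [IsRoot, eval_map_algebraMap] at hx
  have hx_mem : x ∈ integralClosure R T := isIntegral_trans x ⟨p, hmonic, hroot⟩
  refine ⟨⟨x, hx_mem⟩, hι ?_⟩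
  rw [map_zero, ← hroot]
  exact (aeval_algebraMap_apply_eq_algebraMap_eval (A := T) _ p).symm

section Localization

variable {R A T : Type*} [CommRing R] [CommRing A] [CommRing T] [Algebra R A] [Algebra A T]
  [Algebra R T] [IsScalarTower R A T] (F : Submonoid R) [IsLocalization F A]

theorem isLocalization_integralClosure [Algebra.IsIntegral A T] :
    IsLocalization (Algebra.algebraMapSubmonoid (integralClosure R T) F) T where
  map_units := by
    rintro ⟨_, v, hv, rfl⟩
    rw [← IsScalarTower.algebraMap_apply, IsScalarTower.algebraMap_apply R A T]
    exact (IsLocalization.map_units A ⟨v, hv⟩).map _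
  surj z := by
    obtain ⟨v, hv⟩ :=
      (Algebra.IsIntegral.isIntegral (R := A) z).exists_multiple_integral_of_isLocalization F
    refine ⟨(⟨(v : R) • z, hv⟩, ⟨_, Algebra.mem_algebraMapSubmonoid_of_mem v⟩), ?_⟩
    simp [Algebra.smul_def, mul_comm]
  exists_of_eq {x y} hxy := ⟨1, by rw [Subtype.val_injective hxy]⟩

theorem tight_integralClosure [Algebra.IsIntegral A T] (hF : F ≤ nonZeroDivisors R)
    (hT : Tight (algebraMap A T)) : Tight (algebraMap R (integralClosure R T)) := by
  intro s hs
  obtain ⟨t, q, hq, hst⟩ := hT s (by simpa using hs)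
  obtain ⟨⟨r, u⟩, hru⟩ := IsLocalization.surj F q
  have hr : r ≠ 0 := by
    rintro rfl
    rw [map_zero, (IsLocalization.map_units A u).mul_left_eq_zero] at hru
    exact hq hru
  obtain ⟨v, hv⟩ :=
    (Algebra.IsIntegral.isIntegral (R := A) t).exists_multiple_integral_of_isLocalization F
  refine ⟨⟨(v : R) • t, hv⟩ * algebraMap R _ u, r * v, fun h => hr ((hF v.2).2 r h), ?_⟩
  apply Subtype.val_injective
  simp only [Subalgebra.coe_mul, Subalgebra.coe_algebraMap, map_mul, Algebra.smul_def,
    IsScalarTower.algebraMap_apply R A T]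
  have hru' := congrArg (algebraMap A T) hru
  rw [map_mul] at hru'
  linear_combination (algebraMap A T (algebraMap R A u) * algebraMap A T (algebraMap R A v)) * hst
    + algebraMap A T (algebraMap R A v) * hru'

theorem isAIC_integralClosure (hF : F ≤ nonZeroDivisors R) (hT : IsAIC (algebraMap A T)) :
    IsAIC (algebraMap R (integralClosure R T)) := by
  obtain ⟨hinj, hint, htight, hai⟩ := hT
  have : Algebra.IsIntegral A T := ⟨hint⟩
  have hRT : Function.Injective (algebraMap R T) := by
    rw [IsScalarTower.algebraMap_eq R A T]
    exact hinj.comp (IsLocalization.injective A hF)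
  exact ⟨fun a b hab => hRT (congrArg Subtype.val hab), fun x => integralClosure.isIntegral x,
    tight_integralClosure F hF htight, aiClosed_integralClosure hai⟩

end Localization

theorem exists_ringEquiv_comp_eq_locMap {R S S' T : Type*} [CommRing R] [CommRing S]
    [CommRing S'] [CommRing T] [Algebra R S'] [Algebra S' T] [Algebra R T] [IsScalarTower R S' T]
    (f : R →+* S) (F : Submonoid R) [IsLocalization (Algebra.algebraMapSubmonoid S' F) T]
    (e : S' ≃+* S) (he : e.toRingHom.comp (algebraMap R S') = f)
    (g : Localization F →+* T) (hg : g.comp (algebraMap R (Localization F)) = algebraMap R T) :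
    ∃ e' : T ≃+* Localization (F.map f), e'.toRingHom.comp g = locMap f F := by
  have hmap : (Algebra.algebraMapSubmonoid S' F).map e.toMonoidHom = F.map f := by
    subst he
    ext
    simp [Algebra.algebraMapSubmonoid]
  refine ⟨IsLocalization.ringEquivOfRingEquiv T _ e hmap,
    IsLocalization.ringHom_ext F (RingHom.ext fun x => ?_)⟩
  have hgx : g (algebraMap R _ x) = algebraMap S' T (algebraMap R S' x) := by
    rw [← RingHom.comp_apply, hg, IsScalarTower.algebraMap_apply R S' T]
  simp [hgx, locMap, IsLocalization.map_eq, ← he]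

theorem aic_localization_unique_general (R : Type u) (S : Type u) [CommRing R] [CommRing S]
    (f : R →+* S)
    (huniq : ∀ (S' : Type u) [CommRing S'] (f' : R →+* S'), IsAIC f' →
      ∃ e : S' ≃+* S, e.toRingHom.comp f' = f)
    (F : Submonoid R) (hF : F ≤ nonZeroDivisors R) :
    ∀ (T : Type u) [CommRing T] (g : Localization F →+* T), IsAIC g →
      ∃ e : T ≃+* Localization (F.map f), e.toRingHom.comp g = locMap f F := by
  intro T _ g hg
  let := g.toAlgebra
  let : Algebra R T := (g.comp (algebraMap R (Localization F))).toAlgebra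
  have : IsScalarTower R (Localization F) T := .of_algebraMap_eq fun _ => rfl
  have : Algebra.IsIntegral (Localization F) T := ⟨hg.2.1⟩
  have := isLocalization_integralClosure (T := T) (A := Localization F) F
  obtain ⟨e, he⟩ := huniq _ _ (isAIC_integralClosure F hF hg)
  exact exists_ringEquiv_comp_eq_locMap f F e he g rfl

/-- If `S = R⁺` is the unique absolute integral closure of `R` (every aic of `R` is
`R`-isomorphic to `S`), and `F` is a submonoid of regular elements of `R`, then every
absolute integral closure of `F⁻¹R` is `F⁻¹R`-isomorphic to `F⁻¹S`;
that is, `(F⁻¹R)⁺ = F⁻¹(R⁺)`. -/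
theorem aic_localization_unique (R : Type u) (S : Type u) [CommRing R] [CommRing S]
    (f : R →+* S) (hf : IsAIC f)
    (huniq : ∀ (S' : Type u) [CommRing S'] (f' : R →+* S'), IsAIC f' →
      ∃ e : S' ≃+* S, e.toRingHom.comp f' = f)
    (F : Submonoid R) (hF : F ≤ nonZeroDivisors R) :
    ∀ (T : Type u) [CommRing T] (g : Localization F →+* T), IsAIC g →
      ∃ e : T ≃+* Localization (F.map f), e.toRingHom.comp g = locMap f F :=
  aic_localization_unique_general R S f huniq F hF
end

section
/- Let R be a reduced commutative ring with only finitely many minimal prime ideals, and set T = ∏_{p ∈ min(R)} (R/p)⁺, where (R/p)⁺ is the integral closure of R/p in an algebraic closure of Frac(R/p), with the canonical map R → T. Then T is an absolute integral closure of R, and it is universal: every absolute integral closure S of R admits an injective R-algebra homomorphism into T. -/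
/-- Minimal primes are prime. -/
instance minimalPrimes.isPrime' {R : Type u} [CommRing R] (p : minimalPrimes R) :
    (p : Ideal R).IsPrime := p.2.1.1

/-- The canonical map `R → T = ∏_{p ∈ min(R)} (R/p)⁺`. -/
noncomputable def minPlusMap (R : Type u) [CommRing R] :
    R →+* ∀ p : minimalPrimes R,
      integralClosure (R ⧸ (p : Ideal R))
        (AlgebraicClosure (FractionRing (R ⧸ (p : Ideal R)))) :=
  Pi.ringHom fun p =>
    (algebraMap (R ⧸ (p : Ideal R))
      (integralClosure (R ⧸ (p : Ideal R))
        (AlgebraicClosure (FractionRing (R ⧸ (p : Ideal R)))))).comp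
      (Ideal.Quotient.mk (p : Ideal R))

/-! The canonical map factors as `R → ∏ R/p → ∏ (R/p)⁺`. The first map is injective since the
minimal primes of a reduced ring intersect in the nilradical, and tight since, the minimal primes
being finitely many and pairwise incomparable, for every `q` some `c` lies in all of them except
`q`. The second is a product of integral extensions of domains, each of which is tight.
Integrality can be checked componentwise because there are finitely many components, and a
product of ai closed rings is ai closed.

For universality, lying over gives a prime `Q` of `S` above each minimal prime `p`; the integral
extension `R/p → S/Q` of domains embeds into the algebraic closure of `Frac(R/p)`, necessarily
into `(R/p)⁺`. The induced `S → T` is injective because `S` is tight over `R` and `R → T` is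
injective. -/

open Polynomial

def RingHom.piMap {ι : Type*} {A B : ι → Type*} [∀ i, NonAssocSemiring (A i)]
    [∀ i, NonAssocSemiring (B i)] (f : ∀ i, A i →+* B i) : (∀ i, A i) →+* ∀ i, B i :=
  RingHom.pi fun i => (f i).comp (Pi.evalRingHom A i)

theorem RingHom.coe_piMap {ι : Type*} {A B : ι → Type*} [∀ i, NonAssocSemiring (A i)]
    [∀ i, NonAssocSemiring (B i)] (f : ∀ i, A i →+* B i) :
    ⇑(RingHom.piMap f) = Pi.map fun i => f i :=
  rfl

theorem RingHom.IsIntegral.pi {ι R : Type*} {S : ι → Type*} [_root_.Finite ι] [CommRing R]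
    [∀ i, CommRing (S i)] {f : ∀ i, R →+* S i} (hf : ∀ i, (f i).IsIntegral) :
    (RingHom.pi f).IsIntegral := by
  classical
  have := Fintype.ofFinite ι
  intro x
  choose q hq_monic hq_root using fun i => hf i (x i)
  refine ⟨∏ i, q i, monic_prod_of_monic _ _ fun i _ => hq_monic i, funext fun i => ?_⟩
  change Pi.evalRingHom S i (eval₂ (RingHom.pi f) x (∏ i, q i)) = 0
  rw [hom_eval₂, eval₂_finsetProd]
  exact Finset.prod_eq_zero (Finset.mem_univ i) (hq_root i)

section Tight

variable {R S T : Type*} [CommRing R] [CommRing S] [CommRing T]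

theorem Tight.comp {f : R →+* S} {g : S →+* T} (hg : Tight g) (hf : Tight f) :
    Tight (g.comp f) := by
  intro x hx
  obtain ⟨u, s, hs, hxu⟩ := hg x hx
  obtain ⟨v, r, hr, hsv⟩ := hf s hs
  exact ⟨u * g v, r, hr, by rw [← mul_assoc, hxu, ← map_mul, hsv, RingHom.comp_apply]⟩

theorem Tight.injective_of_injective_comp {g : R →+* S} (hg : Tight g) {h : S →+* T}
    (hinj : Function.Injective (h.comp g)) : Function.Injective h := by
  refine (injective_iff_map_eq_zero h).mpr fun s hs => by_contra fun hs0 => ?_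
  obtain ⟨t, r, hr, hst⟩ := hg s hs0
  refine hr (hinj ?_)
  rw [RingHom.comp_apply, ← hst, map_mul, hs, zero_mul, map_zero]

theorem RingHom.IsIntegral.tight [IsDomain S] {f : R →+* S} (hf : f.IsIntegral) : Tight f := by
  let _ : Algebra R S := f.toAlgebra
  have := f.domain_nontrivial
  intro x hx
  obtain ⟨r, hr, hr0⟩ := Submodule.exists_mem_ne_zero_of_ne_bot
    (Ideal.comap_ne_bot_of_integral_mem hx (Ideal.mem_span_singleton_self x) (hf x))
  obtain ⟨t, ht⟩ := Ideal.mem_span_singleton'.mp hr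
  exact ⟨t, r, hr0, by rw [mul_comm]; exact ht⟩

theorem Tight.piMap {ι : Type*} {A B : ι → Type*} [∀ i, CommRing (A i)] [∀ i, CommRing (B i)]
    {f : ∀ i, A i →+* B i} (hf : ∀ i, Tight (f i)) : Tight (RingHom.piMap f) := by
  classical
  intro s hs
  obtain ⟨i, hi⟩ := Function.ne_iff.mp hs
  obtain ⟨t, a, ha, hsa⟩ := hf i (s i) hi
  refine ⟨Pi.single i t, Pi.single i a, by simpa using ha, funext fun j => ?_⟩
  rcases eq_or_ne j i with rfl | hj
  · simp [RingHom.coe_piMap, hsa]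
  · simp [RingHom.coe_piMap, hj]

end Tight

theorem AIClosed.pi {ι : Type*} {S : ι → Type*} [∀ i, CommRing (S i)]
    (hS : ∀ i, AIClosed (S i)) : AIClosed (∀ i, S i) := by
  intro p hp hdeg
  have hroot (i : ι) : ∃ x, (p.map (Pi.evalRingHom S i)).IsRoot x := by
    rcases subsingleton_or_nontrivial (S i) with _ | _
    · exact ⟨0, Subsingleton.elim _ _⟩
    · exact hS i _ (hp.map _) (by rwa [hp.degree_map])
  choose x hx using hroot
  refine ⟨x, funext fun i => ?_⟩
  change Pi.evalRingHom S i (p.eval x) = 0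
  rw [← eval₂_at_apply, ← eval_map]
  exact hx i

theorem aiClosed_integralClosure_s17 (D K : Type*) [CommRing D] [Field K] [IsAlgClosed K]
    [Algebra D K] : AIClosed (integralClosure D K) := by
  intro p hp hdeg
  obtain ⟨z, hz⟩ := IsAlgClosed.exists_root (p.map (algebraMap (integralClosure D K) K))
    (by rw [hp.degree_map]; exact hdeg.ne')
  have hz_mem : z ∈ integralClosure D K :=
    isIntegral_trans (A := integralClosure D K) z ⟨p, hp, by rwa [← eval_map]⟩
  refine ⟨⟨z, hz_mem⟩, Subtype.val_injective ?_⟩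
  change algebraMap (integralClosure D K) K (p.eval ⟨z, hz_mem⟩) =
    algebraMap (integralClosure D K) K 0
  rw [← eval₂_at_apply, map_zero, ← eval_map]
  exact hz

instance (D : Type*) [CommRing D] [IsDomain D] :
    Module.IsTorsionFree D (AlgebraicClosure (FractionRing D)) := by
  rw [Module.isTorsionFree_iff_algebraMap_injective,
    IsScalarTower.algebraMap_eq D (FractionRing D), RingHom.coe_comp]
  exact (algebraMap (FractionRing D) _).injective.comp (IsFractionRing.injective D _)

theorem RingHom.IsIntegral.exists_lift_integralClosure_quotient {R S : Type*} [CommRing R]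
    [CommRing S] {g : R →+* S} (hg : g.IsIntegral) (hinj : Function.Injective g) (p : Ideal R)
    [p.IsPrime] (K : Type*) [Field K] [IsAlgClosed K] [Algebra (R ⧸ p) K]
    [Module.IsTorsionFree (R ⧸ p) K] :
    ∃ h : S →+* integralClosure (R ⧸ p) K,
      h.comp g = (algebraMap (R ⧸ p) (integralClosure (R ⧸ p) K)).comp (Ideal.Quotient.mk p) := by
  let _ : Algebra R S := g.toAlgebra
  have : Algebra.IsIntegral R S := ⟨hg⟩
  have : FaithfulSMul R S := (faithfulSMul_iff_algebraMap_injective R S).mpr hinj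
  obtain ⟨Q, _, _⟩ := Ideal.nonempty_primesOver (S := S) p
  have : Module.IsTorsionFree (R ⧸ p) (S ⧸ Q) :=
    Module.isTorsionFree_iff_algebraMap_injective.mpr (FaithfulSMul.algebraMap_injective _ _)
  let φ : S ⧸ Q →ₐ[R ⧸ p] K := IsAlgClosed.lift
  refine ⟨(φ.toRingHom.comp (Ideal.Quotient.mk Q)).codRestrict _
    fun s => (Algebra.IsIntegral.isIntegral _).map φ, RingHom.ext fun r => Subtype.ext ?_⟩
  exact φ.commutes (Ideal.Quotient.mk p r)

namespace minimalPrimes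

variable (R : Type*) [CommRing R]

def piQuotientMap : R →+* ∀ p : minimalPrimes R, R ⧸ (p : Ideal R) :=
  RingHom.pi fun p => Ideal.Quotient.mk (p : Ideal R)

theorem piQuotientMap_injective [IsReduced R] : Function.Injective (piQuotientMap R) := by
  refine (injective_iff_map_eq_zero _).mpr fun r hr => ?_
  have hmem : r ∈ sInf (minimalPrimes R) := Ideal.mem_sInf.mpr fun {p} hp =>
    Ideal.Quotient.eq_zero_iff_mem.mp (congrFun hr ⟨p, hp⟩)
  rw [minimalPrimes, Ideal.sInf_minimalPrimes] at hmem
  exact (Submodule.mem_bot R).mp ((nilradical_eq_zero R).le hmem)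

variable {R}

theorem exists_notMem_and_forall_mem_of_ne (hfin : (minimalPrimes R).Finite)
    (q : minimalPrimes R) :
    ∃ c ∉ (q : Ideal R), ∀ p : minimalPrimes R, p ≠ q → c ∈ (p : Ideal R) := by
  classical
  have := hfin.fintype
  have hnle : ¬ ∏ p ∈ Finset.univ.erase q, (p : Ideal R) ≤ q := by
    rw [Ideal.IsPrime.prod_le inferInstance]
    rintro ⟨p, hp, hpq⟩
    exact (Finset.mem_erase.mp hp).1 (Subtype.ext (le_antisymm hpq (q.2.2 ⟨p.2.1.1, bot_le⟩ hpq)))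
  obtain ⟨c, hc, hcq⟩ := Set.not_subset.mp hnle
  exact ⟨c, hcq, fun p hp => Ideal.prod_le_inf.trans
    (Finset.inf_le (Finset.mem_erase.mpr ⟨hp, Finset.mem_univ p⟩)) hc⟩

theorem tight_piQuotientMap (hfin : (minimalPrimes R).Finite) : Tight (piQuotientMap R) := by
  intro s hs
  obtain ⟨q, hq⟩ := Function.ne_iff.mp hs
  obtain ⟨a, ha⟩ := Ideal.Quotient.mk_surjective (s q)
  obtain ⟨c, hcq, hc⟩ := exists_notMem_and_forall_mem_of_ne hfin q
  refine ⟨piQuotientMap R c, a * c, fun hac => ?_, funext fun p => ?_⟩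
  · have : s q * Ideal.Quotient.mk (q : Ideal R) c = 0 := by
      rw [← ha, ← map_mul, hac, map_zero]
    exact mul_ne_zero hq (by rwa [Ne, Ideal.Quotient.eq_zero_iff_mem]) this
  · rcases eq_or_ne p q with rfl | hpq
    · simp [piQuotientMap, ha]
    · simp [piQuotientMap, Ideal.Quotient.eq_zero_iff_mem.mpr (hc p hpq)]

end minimalPrimes

/-- For a reduced ring `R` with finitely many minimal primes,
`T = ∏_{p ∈ min(R)} (R/p)⁺` is an absolute integral closure of `R`, and it is universal:
every absolute integral closure of `R` embeds into `T` over `R`. -/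
theorem minPlus_isAIC_and_universal (R : Type u) [CommRing R] [IsReduced R]
    (hfin : (minimalPrimes R).Finite) :
    IsAIC (minPlusMap R) ∧
      ∀ (S : Type v) [CommRing S] (g : R →+* S), IsAIC g →
        ∃ h : S →+* ∀ p : minimalPrimes R,
            integralClosure (R ⧸ (p : Ideal R))
              (AlgebraicClosure (FractionRing (R ⧸ (p : Ideal R)))),
          Function.Injective h ∧ h.comp g = minPlusMap R := by
  have hfactor : minPlusMap R = (RingHom.piMap fun p : minimalPrimes R =>
      algebraMap (R ⧸ (p : Ideal R)) (integralClosure (R ⧸ (p : Ideal R))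
        (AlgebraicClosure (FractionRing (R ⧸ (p : Ideal R)))))).comp
      (minimalPrimes.piQuotientMap R) := rfl
  have hinj : Function.Injective (minPlusMap R) := by
    rw [hfactor, RingHom.coe_comp, RingHom.coe_piMap]
    exact (Function.Injective.piMap fun _ => FaithfulSMul.algebraMap_injective _ _).comp
      (minimalPrimes.piQuotientMap_injective R)
  have hint : (minPlusMap R).IsIntegral := by
    have := hfin.to_subtype
    exact RingHom.IsIntegral.pi fun p => RingHom.IsIntegral.trans _ _
      ((Ideal.Quotient.mk _).isIntegral_of_surjective Ideal.Quotient.mk_surjective)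
      fun x => integralClosure.isIntegral x
  have htight : Tight (minPlusMap R) := by
    rw [hfactor]
    exact (Tight.piMap fun _ => RingHom.IsIntegral.tight fun x => integralClosure.isIntegral x
      ).comp (minimalPrimes.tight_piQuotientMap hfin)
  refine ⟨⟨hinj, hint, htight, AIClosed.pi fun _ => aiClosed_integralClosure_s17 _ _⟩,
    fun S _ g ⟨hg_inj, hg_int, hg_tight, _⟩ => ?_⟩
  choose h hh using fun p : minimalPrimes R =>
    hg_int.exists_lift_integralClosure_quotient hg_inj (p : Ideal R)
      (AlgebraicClosure (FractionRing (R ⧸ (p : Ideal R))))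
  have hcomp : (RingHom.pi h).comp g = minPlusMap R :=
    RingHom.ext fun r => funext fun p => RingHom.congr_fun (hh p) r
  exact ⟨RingHom.pi h, hg_tight.injective_of_injective_comp (hcomp ▸ hinj), hcomp⟩
end
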